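/- Consider the noisy SIS model on a finite graph G_n with |V_n| = n, parameters a, λ, κ > 0 with a + λ·Δ_max < 1, in the strong external infection regime 0 < κ < 1/(4(n-1)) and a > 1 - κ > 1/2, and let γ := (1-κ)a + (1-a)κ - 2(n-1)κ(1-κ). For any two initial configurations σ_0, η_0 ∈ {0,1}^{V_n} and any integer t ≥ 0, there exists a coupling of the two chains started from σ_0 and η_0 such that E[ρ(σ(t), η(t))] ≤ ρ(σ_0, η_0)·(1 - γ/n)^t. -/

import Mathlib

open Finset Real

noncomputable section

abbrev Config (n : ℕ) := Fin n → Bool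

variable {n : ℕ}

/-- Expectation of `f` under a finitely-supported distribution `μ`. -/
def expect {S : Type*} [Fintype S] (μ : S → ℝ) (f : S → ℝ) : ℝ := ∑ s, μ s * f s

/-- One step of evolution of a distribution under a transition kernel `K`. -/
def stepDist {S : Type*} [Fintype S] (K : S → S → ℝ) (μ : S → ℝ) : S → ℝ :=
  fun s' => ∑ s, μ s * K s s'

/-- `t` steps of evolution of a distribution under a transition kernel `K`. -/
def iterDist {S : Type*} [Fintype S] (K : S → S → ℝ) (μ : S → ℝ) : ℕ → S → ℝ
  | 0 => μ
  | t + 1 => stepDist K (iterDist K μ t)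

/-- The point mass at `s0`. -/
def deltaDist {S : Type*} [DecidableEq S] (s0 : S) : S → ℝ := fun s => if s = s0 then 1 else 0

/-- Hamming distance between two configurations. -/
def hamming (σ η : Config n) : ℕ := (univ.filter fun x => σ x ≠ η x).card

/-- Probability that the chosen vertex `x` changes its state: an infected vertex recovers
with probability `kap`, a susceptible vertex gets infected with probability
`a + lam * (number of infected neighbours)`. -/
def flipProb (ninf : Config n → Fin n → ℕ) (a lam kap : ℝ) (σ : Config n) (x : Fin n) : ℝ :=
  if σ x then kap else a + lam * ninf σ x

/-- The configuration obtained from `σ` by flipping the state of vertex `x`. -/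
def flipAt (σ : Config n) (x : Fin n) : Config n := Function.update σ x (!σ x)

/-- Conditional one-step law of the noisy SIS chain given that vertex `x` was chosen. -/
def localKernel (ninf : Config n → Fin n → ℕ) (a lam kap : ℝ) (σ : Config n) (x : Fin n)
    (σ' : Config n) : ℝ :=
  (if σ' = flipAt σ x then flipProb ninf a lam kap σ x else 0)
    + (if σ' = σ then 1 - flipProb ninf a lam kap σ x else 0)

/-- The transition kernel of the noisy SIS chain: a vertex is chosen uniformly at random
and updated according to the SIS rules. -/
def sisKernel (ninf : Config n → Fin n → ℕ) (a lam kap : ℝ) : Config n → Config n → ℝ :=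
  fun σ σ' => (1 / n) * ∑ x : Fin n, localKernel ninf a lam kap σ x σ'

/-- The coupling of two noisy SIS chains used in the paper: the same uniformly chosen vertex
is updated in both chains, independently. -/
def sisCoupling (ninf : Config n → Fin n → ℕ) (a lam kap : ℝ) :
    Config n × Config n → Config n × Config n → ℝ :=
  fun p q =>
    (1 / n) * ∑ x : Fin n,
      localKernel ninf a lam kap p.1 x q.1 * localKernel ninf a lam kap p.2 x q.2

/-- Number of infected neighbours of `x` in the graph `G` for the configuration `σ`. -/
def nInfGraph (G : SimpleGraph (Fin n)) [DecidableRel G.Adj] : Config n → Fin n → ℕ :=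
  fun σ x => ((G.neighborFinset x).filter fun y => σ y = true).card

/-- Total variation distance between two distributions on a finite state space. -/
def dTV {S : Type*} [Fintype S] (μ ν : S → ℝ) : ℝ := (1 / 2) * ∑ s, |μ s - ν s|

/-- The law at time `t` of the noisy SIS chain started from `η0`. -/
def sisLaw (ninf : Config n → Fin n → ℕ) (a lam kap : ℝ) (η0 : Config n) (t : ℕ) :
    Config n → ℝ :=
  iterDist (sisKernel ninf a lam kap) (deltaDist η0) t

/-- `pim` is a stationary distribution for the kernel `K`. -/
def IsStationaryKernel {S : Type*} [Fintype S] (K : S → S → ℝ) (pim : S → ℝ) : Prop :=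
  (∀ s, 0 ≤ pim s) ∧ (∑ s, pim s) = 1 ∧ ∀ s', (∑ s, pim s * K s s') = pim s'

/-- Worst-case total variation distance to the stationary distribution `pim` at time `t`. -/
def worstDist (ninf : Config n → Fin n → ℕ) (a lam kap : ℝ) (pim : Config n → ℝ) (t : ℕ) : ℝ :=
  ⨆ η0 : Config n, dTV (sisLaw ninf a lam kap η0 t) pim

/-- The `ε`-mixing time of the noisy SIS chain. -/
def mixingTime (ninf : Config n → Fin n → ℕ) (a lam kap : ℝ) (pim : Config n → ℝ) (ε : ℝ) : ℕ :=
  sInf {t : ℕ | worstDist ninf a lam kap pim t ≤ ε}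

/-- The contraction constant `γ` of the paper. -/
def gammaSIS (n : ℕ) (a kap : ℝ) : ℝ :=
  (1 - kap) * a + (1 - a) * kap - 2 * ((n : ℝ) - 1) * kap * (1 - kap)

/-- The constant `β` of the paper. -/
def betaSIS (pstar kap : ℝ) : ℝ := kap + pstar * (1 - 2 * kap)

/-- `c` is a coupling of the distributions `μ` and `ν`. -/
def IsCouplingDist {S : Type*} [Fintype S] (c : S × S → ℝ) (μ ν : S → ℝ) : Prop :=
  (∀ q, 0 ≤ c q) ∧ (∀ s, (∑ e, c (s, e)) = μ s) ∧ (∀ e, (∑ s, c (s, e)) = ν e)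

/-- `Kc` is a (Markovian) coupling kernel for the transition kernel `K`: both marginals of
every row of `Kc` evolve according to `K`. -/
def IsCouplingKernel {S : Type*} [Fintype S] (Kc : S × S → S × S → ℝ) (K : S → S → ℝ) : Prop :=
  (∀ p q, 0 ≤ Kc p q) ∧ (∀ p s', (∑ e', Kc p (s', e')) = K p.1 s')
    ∧ (∀ p e', (∑ s', Kc p (s', e')) = K p.2 e')

end

section AuxNoisySIS
open Finset
variable {n : ℕ}

/-- Real-valued disagreement indicator sum (equal to the Hamming distance). -/
def Dind (σ η : Config n) : ℝ := ∑ y, (if σ y ≠ η y then (1:ℝ) else 0)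

lemma Dind_nonneg (σ η : Config n) : 0 ≤ Dind σ η := by
  apply Finset.sum_nonneg; intro y _; split <;> norm_num

lemma hamming_eq_Dind (σ η : Config n) : (hamming σ η : ℝ) = Dind σ η := by
  simp [hamming, Dind, Finset.card_filter, apply_ite (Nat.cast : ℕ → ℝ)]

lemma Dind_self (σ : Config n) : Dind σ σ = 0 := by simp [Dind]

lemma flipAt_apply_self (σ : Config n) (x : Fin n) : flipAt σ x x = !σ x := by
  simp [flipAt]

lemma flipAt_apply_ne (σ : Config n) {x y : Fin n} (h : y ≠ x) : flipAt σ x y = σ y := by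
  simp [flipAt, Function.update_of_ne h]

lemma flipAt_ne (σ : Config n) (x : Fin n) : flipAt σ x ≠ σ := by
  intro h
  have := congrFun h x
  rw [flipAt_apply_self] at this
  cases hx : σ x <;> rw [hx] at this <;> simp at this

lemma Dind_flip_left (σ η : Config n) (x : Fin n) :
    Dind (flipAt σ x) η = Dind σ η + (if σ x = η x then 1 else -1) := by
  unfold Dind
  rw [← Finset.sum_erase_add _ _ (mem_univ x), ← Finset.sum_erase_add _ _ (mem_univ x)]
  rw [Finset.sum_congr rfl (fun y hy => by
    rw [flipAt_apply_ne σ (Finset.ne_of_mem_erase hy)])]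
  rw [flipAt_apply_self]
  cases hx : σ x <;> cases hy : η x <;> simp

lemma Dind_flip_right (σ η : Config n) (x : Fin n) :
    Dind σ (flipAt η x) = Dind σ η + (if σ x = η x then 1 else -1) := by
  unfold Dind
  rw [← Finset.sum_erase_add _ _ (mem_univ x), ← Finset.sum_erase_add _ _ (mem_univ x)]
  rw [Finset.sum_congr rfl (fun y hy => by
    rw [flipAt_apply_ne η (Finset.ne_of_mem_erase hy)])]
  rw [flipAt_apply_self]
  cases hx : σ x <;> cases hy : η x <;> simp

lemma Dind_flip_both (σ η : Config n) (x : Fin n) :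
    Dind (flipAt σ x) (flipAt η x) = Dind σ η := by
  unfold Dind
  rw [← Finset.sum_erase_add _ _ (mem_univ x), ← Finset.sum_erase_add _ _ (mem_univ x)]
  rw [Finset.sum_congr rfl (fun y hy => by
    rw [flipAt_apply_ne σ (Finset.ne_of_mem_erase hy),
        flipAt_apply_ne η (Finset.ne_of_mem_erase hy)])]
  rw [flipAt_apply_self, flipAt_apply_self]
  cases hx : σ x <;> cases hy : η x <;> simp

lemma Dind_pos_of_ne {σ η : Config n} (h : σ ≠ η) : 1 ≤ Dind σ η := by
  obtain ⟨x, hx⟩ := Function.ne_iff.mp h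
  calc (1:ℝ) = if σ x ≠ η x then (1:ℝ) else 0 := by simp [hx]
    _ ≤ Dind σ η := Finset.single_le_sum (f := fun y => if σ y ≠ η y then (1:ℝ) else 0)
      (fun y _ => by split <;> norm_num) (mem_univ x)

lemma sum_localKernel_mul (ninf : Config n → Fin n → ℕ) (a lam kap : ℝ) (σ : Config n)
    (x : Fin n) (h : Config n → ℝ) :
    ∑ σ', localKernel ninf a lam kap σ x σ' * h σ'
      = flipProb ninf a lam kap σ x * h (flipAt σ x)
        + (1 - flipProb ninf a lam kap σ x) * h σ := by
  unfold localKernel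
  simp only [add_mul, ite_mul, zero_mul, Finset.sum_add_distrib]
  rw [Finset.sum_ite_eq' univ (flipAt σ x) (fun σ' => flipProb ninf a lam kap σ x * h σ'),
      Finset.sum_ite_eq' univ σ (fun σ' => (1 - flipProb ninf a lam kap σ x) * h σ')]
  simp

lemma sum_localKernel (ninf : Config n → Fin n → ℕ) (a lam kap : ℝ) (σ : Config n) (x : Fin n) :
    ∑ σ', localKernel ninf a lam kap σ x σ' = 1 := by
  have h := sum_localKernel_mul ninf a lam kap σ x (fun _ => 1)
  simp only [mul_one] at h
  rw [h]; ring

lemma localKernel_nonneg (ninf : Config n → Fin n → ℕ) {a lam kap : ℝ} (σ : Config n) (x : Fin n)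
    (σ' : Config n) (h0 : 0 ≤ flipProb ninf a lam kap σ x)
    (h1 : flipProb ninf a lam kap σ x ≤ 1) :
    0 ≤ localKernel ninf a lam kap σ x σ' := by
  unfold localKernel
  split <;> split <;> linarith

lemma nInfGraph_le_maxDegree (G : SimpleGraph (Fin n)) [DecidableRel G.Adj]
    (σ : Config n) (x : Fin n) : nInfGraph G σ x ≤ G.maxDegree := by
  refine le_trans (Finset.card_filter_le _ _) ?_
  exact G.degree_le_maxDegree x

lemma flipProb_nonneg_G {a lam kap : ℝ} (G : SimpleGraph (Fin n)) [DecidableRel G.Adj]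
    (ha : 0 < a) (hlam : 0 < lam) (hkap : 0 < kap) (σ : Config n) (x : Fin n) :
    0 ≤ flipProb (nInfGraph G) a lam kap σ x := by
  unfold flipProb; split
  · exact hkap.le
  · positivity

lemma flipProb_le_one_G {a lam kap : ℝ} (G : SimpleGraph (Fin n)) [DecidableRel G.Adj]
    (hkap1 : kap ≤ 1) (hlam : 0 < lam) (hpstar : a + lam * (G.maxDegree : ℝ) < 1)
    (σ : Config n) (x : Fin n) :
    flipProb (nInfGraph G) a lam kap σ x ≤ 1 := by
  unfold flipProb; split
  · exact hkap1
  · have h1 : ((nInfGraph G σ x : ℕ) : ℝ) ≤ (G.maxDegree : ℝ) :=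
      Nat.cast_le.mpr (nInfGraph_le_maxDegree G σ x)
    nlinarith

/-- The exact value of the conditional expected Hamming distance after updating vertex `x`
independently in both chains. -/
lemma coupling_inner (ninf : Config n → Fin n → ℕ) (a lam kap : ℝ) (σ η : Config n)
    (x : Fin n) :
    ∑ σ', ∑ η', localKernel ninf a lam kap σ x σ' * localKernel ninf a lam kap η x η'
        * Dind σ' η'
      = Dind σ η + (if σ x = η x then 1 else -1) *
          (flipProb ninf a lam kap σ x + flipProb ninf a lam kap η x
            - 2 * flipProb ninf a lam kap σ x * flipProb ninf a lam kap η x) := by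
  have inner : ∀ σ' : Config n,
      ∑ η', localKernel ninf a lam kap σ x σ' * localKernel ninf a lam kap η x η' * Dind σ' η'
        = localKernel ninf a lam kap σ x σ' *
            (flipProb ninf a lam kap η x * Dind σ' (flipAt η x)
              + (1 - flipProb ninf a lam kap η x) * Dind σ' η) := by
    intro σ'
    rw [← sum_localKernel_mul ninf a lam kap η x (fun η' => Dind σ' η'), Finset.mul_sum]
    exact Finset.sum_congr rfl (fun η' _ => by ring)
  rw [Finset.sum_congr rfl (fun σ' _ => inner σ')]
  rw [sum_localKernel_mul ninf a lam kap σ x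
    (fun σ' => flipProb ninf a lam kap η x * Dind σ' (flipAt η x)
      + (1 - flipProb ninf a lam kap η x) * Dind σ' η)]
  rw [Dind_flip_both, Dind_flip_left, Dind_flip_right]
  by_cases hxy : σ x = η x
  · simp only [if_pos hxy]; ring
  · simp only [if_neg hxy]; ring

/-- Per-vertex drift bound in the strong external infection regime. -/
lemma ex_bound {a lam kap : ℝ} (G : SimpleGraph (Fin n)) [DecidableRel G.Adj]
    (ha : 0 < a) (hlam : 0 < lam) (hkap : 0 < kap)
    (hpstar : a + lam * (G.maxDegree : ℝ) < 1)
    (hreg1 : 1 - kap < a) (hreg2 : 1 / 2 < 1 - kap)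
    (σ η : Config n) (x : Fin n) :
    (if σ x = η x then (1:ℝ) else -1) *
        (flipProb (nInfGraph G) a lam kap σ x + flipProb (nInfGraph G) a lam kap η x
          - 2 * flipProb (nInfGraph G) a lam kap σ x * flipProb (nInfGraph G) a lam kap η x)
      ≤ if σ x = η x then 2 * kap * (1 - kap) else -((1 - kap) * a + (1 - a) * kap) := by
  have hk2 : kap < 1 / 2 := by linarith
  have ha2 : 1 / 2 < a := by linarith
  have hdeg : (0:ℝ) ≤ (G.maxDegree : ℝ) := Nat.cast_nonneg _
  have ha1 : a < 1 := by nlinarith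
  have hpb : ∀ τ : Config n, τ x = false →
      a ≤ flipProb (nInfGraph G) a lam kap τ x ∧ flipProb (nInfGraph G) a lam kap τ x ≤ 1 := by
    intro τ hτ
    constructor
    · unfold flipProb; rw [hτ]
      simp only [Bool.false_eq_true, if_false]
      have : (0:ℝ) ≤ lam * ((nInfGraph G τ x : ℕ) : ℝ) := by positivity
      linarith
    · exact flipProb_le_one_G G (by linarith) hlam hpstar τ x
  have hpt : ∀ τ : Config n, τ x = true → flipProb (nInfGraph G) a lam kap τ x = kap := by
    intro τ hτ; unfold flipProb; rw [hτ]; simp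
  cases hx : σ x <;> cases hy : η x
  · -- both susceptible
    obtain ⟨h1, h2⟩ := hpb σ hx
    obtain ⟨h3, h4⟩ := hpb η hy
    norm_num
    set p := flipProb (nInfGraph G) a lam kap σ x
    set q := flipProb (nInfGraph G) a lam kap η x
    nlinarith [mul_nonneg (sub_nonneg.2 h1) (by linarith : (0:ℝ) ≤ 2 * q - 1),
      mul_nonneg (sub_nonneg.2 h3) (by linarith : (0:ℝ) ≤ 2 * a - 1),
      mul_nonneg (by linarith : (0:ℝ) ≤ a - (1 - kap)) (by linarith : (0:ℝ) ≤ a - kap)]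
  · -- σ susceptible, η infected : disagreement
    obtain ⟨h1, h2⟩ := hpb σ hx
    have h3 := hpt η hy
    rw [h3]; norm_num
    set p := flipProb (nInfGraph G) a lam kap σ x
    nlinarith [mul_nonneg (sub_nonneg.2 h1) (by linarith : (0:ℝ) ≤ 1 - 2 * kap)]
  · -- σ infected, η susceptible : disagreement
    obtain ⟨h1, h2⟩ := hpb η hy
    have h3 := hpt σ hx
    rw [h3]; norm_num
    set p := flipProb (nInfGraph G) a lam kap η x
    nlinarith [mul_nonneg (sub_nonneg.2 h1) (by linarith : (0:ℝ) ≤ 1 - 2 * kap)]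
  · -- both infected
    have h3 := hpt σ hx
    have h4 := hpt η hy
    rw [h3, h4]; norm_num
    nlinarith

/-- One-step contraction of the expected Hamming distance under the independent coupling,
for distinct configurations. -/
lemma one_step_contraction {a lam kap : ℝ} (hn : 2 ≤ n)
    (G : SimpleGraph (Fin n)) [DecidableRel G.Adj]
    (ha : 0 < a) (hlam : 0 < lam) (hkap : 0 < kap)
    (hpstar : a + lam * (G.maxDegree : ℝ) < 1)
    (hreg1 : 1 - kap < a) (hreg2 : 1 / 2 < 1 - kap)
    (σ η : Config n) (hne : σ ≠ η) :
    ∑ q : Config n × Config n, sisCoupling (nInfGraph G) a lam kap (σ, η) q * Dind q.1 q.2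
      ≤ (1 - gammaSIS n a kap / n) * Dind σ η := by
  set α : ℝ := (1 - kap) * a + (1 - a) * kap with hα
  set β : ℝ := 2 * kap * (1 - kap) with hβdef
  have hk2 : kap < 1 / 2 := by linarith
  have hβ : 0 ≤ β := by rw [hβdef]; nlinarith
  have hn' : (2:ℝ) ≤ (n:ℝ) := by exact_mod_cast hn
  have hn0 : (0:ℝ) < (n:ℝ) := by linarith
  have hD : 1 ≤ Dind σ η := Dind_pos_of_ne hne
  -- rewrite the left side
  have step1 : ∑ q : Config n × Config n,
      sisCoupling (nInfGraph G) a lam kap (σ, η) q * Dind q.1 q.2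
      = (1 / n) * ∑ x : Fin n, ∑ σ', ∑ η',
          localKernel (nInfGraph G) a lam kap σ x σ'
            * localKernel (nInfGraph G) a lam kap η x η' * Dind σ' η' := by
    have e1 : ∀ σ' η' : Config n,
        sisCoupling (nInfGraph G) a lam kap (σ, η) (σ', η') * Dind σ' η'
        = (1 / n) * ∑ x : Fin n, localKernel (nInfGraph G) a lam kap σ x σ'
            * localKernel (nInfGraph G) a lam kap η x η' * Dind σ' η' := by
      intro σ' η'
      simp only [sisCoupling]
      rw [mul_assoc, Finset.sum_mul]
    rw [Fintype.sum_prod_type]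
    rw [Finset.sum_congr rfl (fun σ' _ => Finset.sum_congr rfl (fun η' _ => e1 σ' η'))]
    rw [Finset.sum_congr rfl (fun σ' (_ : σ' ∈ univ) =>
      (Finset.mul_sum univ (fun η' => ∑ x : Fin n, localKernel (nInfGraph G) a lam kap σ x σ'
        * localKernel (nInfGraph G) a lam kap η x η' * Dind σ' η') (1 / (n:ℝ))).symm)]
    rw [← Finset.mul_sum]
    congr 1
    calc ∑ σ' : Config n, ∑ η' : Config n, ∑ x : Fin n,
          localKernel (nInfGraph G) a lam kap σ x σ'
            * localKernel (nInfGraph G) a lam kap η x η' * Dind σ' η'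
        = ∑ σ' : Config n, ∑ x : Fin n, ∑ η' : Config n,
            localKernel (nInfGraph G) a lam kap σ x σ'
              * localKernel (nInfGraph G) a lam kap η x η' * Dind σ' η' :=
          Finset.sum_congr rfl (fun σ' _ => Finset.sum_comm)
      _ = ∑ x : Fin n, ∑ σ' : Config n, ∑ η' : Config n,
            localKernel (nInfGraph G) a lam kap σ x σ'
              * localKernel (nInfGraph G) a lam kap η x η' * Dind σ' η' :=
          Finset.sum_comm
  rw [step1]
  have step2 : ∑ x : Fin n, ∑ σ', ∑ η',
      localKernel (nInfGraph G) a lam kap σ x σ'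
        * localKernel (nInfGraph G) a lam kap η x η' * Dind σ' η'
      ≤ ∑ x : Fin n, (Dind σ η + (if σ x = η x then β else -α)) := by
    refine Finset.sum_le_sum (fun x _ => ?_)
    rw [coupling_inner]
    have := ex_bound G ha hlam hkap hpstar hreg1 hreg2 σ η x
    rw [← hα, ← hβdef] at this
    linarith
  have step3 : ∑ x : Fin n, (Dind σ η + (if σ x = η x then β else -α))
      = (n:ℝ) * Dind σ η + ((n:ℝ) * β - (α + β) * Dind σ η) := by
    rw [Finset.sum_add_distrib, Finset.sum_const, card_univ, Fintype.card_fin]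
    have : ∑ x : Fin n, (if σ x = η x then β else -α)
        = ∑ x : Fin n, (β - (α + β) * (if σ x ≠ η x then (1:ℝ) else 0)) := by
      refine Finset.sum_congr rfl (fun x _ => ?_)
      by_cases hxy : σ x = η x <;> simp [hxy] <;> ring
    rw [this, Finset.sum_sub_distrib, Finset.sum_const, card_univ, Fintype.card_fin,
      ← Finset.mul_sum, nsmul_eq_mul, nsmul_eq_mul]
    simp only [Dind]
  have final : (1 / n) * ((n:ℝ) * Dind σ η + ((n:ℝ) * β - (α + β) * Dind σ η))
      ≤ (1 - gammaSIS n a kap / n) * Dind σ η := by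
    have hγ : gammaSIS n a kap = α - ((n:ℝ) - 1) * β := by
      rw [gammaSIS, hα, hβdef]; ring
    rw [hγ]
    have expand : (1 - (α - ((n:ℝ) - 1) * β) / n) * Dind σ η
        - (1 / n) * ((n:ℝ) * Dind σ η + ((n:ℝ) * β - (α + β) * Dind σ η))
        = (1 / n) * ((Dind σ η - 1) * ((n:ℝ) * β)) := by
      field_simp
      ring
    have hnn : (0:ℝ) ≤ (1 / (n:ℝ)) * ((Dind σ η - 1) * ((n:ℝ) * β)) :=
      mul_nonneg (by positivity) (mul_nonneg (by linarith) (mul_nonneg hn0.le hβ))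
    linarith
  calc (1 / (n:ℝ)) * ∑ x : Fin n, ∑ σ', ∑ η',
        localKernel (nInfGraph G) a lam kap σ x σ'
          * localKernel (nInfGraph G) a lam kap η x η' * Dind σ' η'
      ≤ (1 / n) * ((n:ℝ) * Dind σ η + ((n:ℝ) * β - (α + β) * Dind σ η)) := by
        rw [← step3]
        exact mul_le_mul_of_nonneg_left (step3 ▸ step2) (by positivity)
    _ ≤ (1 - gammaSIS n a kap / n) * Dind σ η := final

end AuxNoisySIS

/-- `t`-step contraction of the expected Hamming distance. -/
theorem noisySIS_t_step_contraction
    (n : ℕ) (hn : 2 ≤ n) (G : SimpleGraph (Fin n)) [DecidableRel G.Adj]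
    (a lam kap : ℝ) (ha : 0 < a) (hlam : 0 < lam) (hkap : 0 < kap)
    (hpstar : a + lam * (G.maxDegree : ℝ) < 1)
    (hkap' : kap < 1 / (4 * ((n : ℝ) - 1)))
    (hreg1 : 1 - kap < a) (hreg2 : 1 / 2 < 1 - kap)
    (σ0 η0 : Config n) (t : ℕ) :
    ∃ Kc : Config n × Config n → Config n × Config n → ℝ,
      IsCouplingKernel Kc (sisKernel (nInfGraph G) a lam kap) ∧
        expect (iterDist Kc (deltaDist (σ0, η0)) t) (fun q => (hamming q.1 q.2 : ℝ)) ≤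
          (hamming σ0 η0 : ℝ) * (1 - gammaSIS n a kap / n) ^ t := by
    classical
  have hk2 : kap < 1 / 2 := by linarith
  have hn' : (2:ℝ) ≤ (n:ℝ) := by exact_mod_cast hn
  have hn0 : (0:ℝ) < (n:ℝ) := by linarith
  have hdeg : (0:ℝ) ≤ (G.maxDegree : ℝ) := Nat.cast_nonneg _
  have hlamd : (0:ℝ) ≤ lam * (G.maxDegree : ℝ) := by positivity
  have ha1 : a < 1 := by linarith
  have hfp0 : ∀ σ x, 0 ≤ flipProb (nInfGraph G) a lam kap σ x :=
    flipProb_nonneg_G G ha hlam hkap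
  have hfp1 : ∀ σ x, flipProb (nInfGraph G) a lam kap σ x ≤ 1 :=
    flipProb_le_one_G G (by linarith) hlam hpstar
  have hLnn : ∀ σ x σ', 0 ≤ localKernel (nInfGraph G) a lam kap σ x σ' :=
    fun σ x σ' => localKernel_nonneg _ σ x σ' (hfp0 σ x) (hfp1 σ x)
  have hKnn : ∀ σ σ', 0 ≤ sisKernel (nInfGraph G) a lam kap σ σ' := by
    intro σ σ'
    apply mul_nonneg (by positivity)
    exact Finset.sum_nonneg fun x _ => hLnn σ x σ'
  set Kc : Config n × Config n → Config n × Config n → ℝ :=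
    fun p q => if p.1 = p.2 then (if q.1 = q.2 then sisKernel (nInfGraph G) a lam kap p.1 q.1 else 0)
               else sisCoupling (nInfGraph G) a lam kap p q with hKc
  have hCnn : ∀ p q, 0 ≤ Kc p q := by
    intro p q
    simp only [hKc]
    split
    · split
      · exact hKnn _ _
      · exact le_refl 0
    · apply mul_nonneg (by positivity)
      exact Finset.sum_nonneg fun x _ => mul_nonneg (hLnn _ _ _) (hLnn _ _ _)
  have marg1 : ∀ p (s' : Config n), (∑ e', Kc p (s', e')) = sisKernel (nInfGraph G) a lam kap p.1 s' := by
    intro p s'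
    simp only [hKc]
    by_cases hp : p.1 = p.2
    · simp only [if_pos hp]
      exact Finset.sum_ite_eq univ s' (fun e' => sisKernel (nInfGraph G) a lam kap p.1 s')
        |>.trans (by simp)
    · simp only [if_neg hp, sisCoupling]
      calc ∑ e' : Config n, (1 / (n:ℝ)) * ∑ x : Fin n,
            localKernel (nInfGraph G) a lam kap p.1 x s'
              * localKernel (nInfGraph G) a lam kap p.2 x e'
          = (1 / (n:ℝ)) * ∑ x : Fin n, ∑ e' : Config n,
              localKernel (nInfGraph G) a lam kap p.1 x s'
                * localKernel (nInfGraph G) a lam kap p.2 x e' := by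
            rw [← Finset.mul_sum, Finset.sum_comm]
        _ = (1 / (n:ℝ)) * ∑ x : Fin n, localKernel (nInfGraph G) a lam kap p.1 x s' := by
            congr 1
            refine Finset.sum_congr rfl fun x _ => ?_
            rw [← Finset.mul_sum, sum_localKernel, mul_one]
        _ = sisKernel (nInfGraph G) a lam kap p.1 s' := rfl
  have marg2 : ∀ p (e' : Config n), (∑ s', Kc p (s', e')) = sisKernel (nInfGraph G) a lam kap p.2 e' := by
    intro p e'
    simp only [hKc]
    by_cases hp : p.1 = p.2
    · simp only [if_pos hp]
      rw [Finset.sum_ite_eq' univ e' (fun s' => sisKernel (nInfGraph G) a lam kap p.1 s')]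
      simp [hp]
    · simp only [if_neg hp, sisCoupling]
      calc ∑ s' : Config n, (1 / (n:ℝ)) * ∑ x : Fin n,
            localKernel (nInfGraph G) a lam kap p.1 x s'
              * localKernel (nInfGraph G) a lam kap p.2 x e'
          = (1 / (n:ℝ)) * ∑ x : Fin n, ∑ s' : Config n,
              localKernel (nInfGraph G) a lam kap p.1 x s'
                * localKernel (nInfGraph G) a lam kap p.2 x e' := by
            rw [← Finset.mul_sum, Finset.sum_comm]
        _ = (1 / (n:ℝ)) * ∑ x : Fin n, localKernel (nInfGraph G) a lam kap p.2 x e' := by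
            congr 1
            refine Finset.sum_congr rfl fun x _ => ?_
            rw [← Finset.sum_mul, sum_localKernel, one_mul]
        _ = sisKernel (nInfGraph G) a lam kap p.2 e' := rfl
  have rowBound : ∀ p : Config n × Config n,
      ∑ q : Config n × Config n, Kc p q * Dind q.1 q.2
        ≤ (1 - gammaSIS n a kap / n) * Dind p.1 p.2 := by
    intro p
    by_cases hp : p.1 = p.2
    · have hz : ∑ q : Config n × Config n, Kc p q * Dind q.1 q.2 = 0 := by
        apply Finset.sum_eq_zero
        intro q _
        simp only [hKc, if_pos hp]
        by_cases hq : q.1 = q.2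
        · rw [if_pos hq, hq, Dind_self, mul_zero]
        · rw [if_neg hq, zero_mul]
      rw [hz, hp, Dind_self, mul_zero]
    · have h1 : ∑ q : Config n × Config n, Kc p q * Dind q.1 q.2
          = ∑ q : Config n × Config n,
              sisCoupling (nInfGraph G) a lam kap (p.1, p.2) q * Dind q.1 q.2 := by
        refine Finset.sum_congr rfl fun q _ => ?_
        simp only [hKc, if_neg hp]
      rw [h1]
      exact one_step_contraction hn G ha hlam hkap hpstar hreg1 hreg2 p.1 p.2 hp
  have hγn : 0 ≤ 1 - gammaSIS n a kap / n := by
    have hγ1 : gammaSIS n a kap ≤ 1 := by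
      rw [gammaSIS]
      nlinarith [mul_nonneg (by linarith : (0:ℝ) ≤ 1 - a) (by linarith : (0:ℝ) ≤ 1 - kap),
        mul_nonneg ha.le hkap.le,
        mul_nonneg (mul_nonneg (by linarith : (0:ℝ) ≤ 2 * ((n:ℝ) - 1)) hkap.le)
          (by linarith : (0:ℝ) ≤ 1 - kap)]
    rw [sub_nonneg, div_le_one hn0]
    linarith
  have hiter : ∀ t q, 0 ≤ iterDist Kc (deltaDist (σ0, η0)) t q := by
    intro t
    induction t with
    | zero =>
      intro q
      simp only [iterDist, deltaDist]
      split <;> norm_num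
    | succ t ih =>
      intro q
      simp only [iterDist, stepDist]
      exact Finset.sum_nonneg fun p _ => mul_nonneg (ih p) (hCnn p q)
  have hstep : ∀ μ : Config n × Config n → ℝ, (∀ p, 0 ≤ μ p) →
      expect (stepDist Kc μ) (fun q => Dind q.1 q.2)
        ≤ (1 - gammaSIS n a kap / n) * expect μ (fun q => Dind q.1 q.2) := by
    intro μ hμ
    unfold _root_.expect stepDist
    calc ∑ q : Config n × Config n, (∑ p, μ p * Kc p q) * Dind q.1 q.2
        = ∑ q : Config n × Config n, ∑ p, μ p * Kc p q * Dind q.1 q.2 :=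
          Finset.sum_congr rfl fun q _ => Finset.sum_mul _ _ _
      _ = ∑ p : Config n × Config n, ∑ q, μ p * Kc p q * Dind q.1 q.2 := Finset.sum_comm
      _ = ∑ p : Config n × Config n, μ p * ∑ q, Kc p q * Dind q.1 q.2 := by
          refine Finset.sum_congr rfl fun p _ => ?_
          rw [Finset.mul_sum]
          exact Finset.sum_congr rfl fun q _ => by ring
      _ ≤ ∑ p : Config n × Config n, μ p * ((1 - gammaSIS n a kap / n) * Dind p.1 p.2) :=
          Finset.sum_le_sum fun p _ => mul_le_mul_of_nonneg_left (rowBound p) (hμ p)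
      _ = (1 - gammaSIS n a kap / n) * ∑ p : Config n × Config n, μ p * Dind p.1 p.2 := by
          rw [Finset.mul_sum]
          exact Finset.sum_congr rfl fun p _ => by ring
  have main : ∀ t, expect (iterDist Kc (deltaDist (σ0, η0)) t) (fun q => Dind q.1 q.2)
      ≤ Dind σ0 η0 * (1 - gammaSIS n a kap / n) ^ t := by
    intro t
    induction t with
    | zero =>
      rw [pow_zero, mul_one]
      show expect (deltaDist (σ0, η0)) (fun q => Dind q.1 q.2) ≤ Dind σ0 η0
      unfold _root_.expect deltaDist
      simp only [ite_mul, one_mul, zero_mul]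
      rw [Finset.sum_ite_eq' univ (σ0, η0) (fun q => Dind q.1 q.2)]
      simp
    | succ t ih =>
      calc expect (iterDist Kc (deltaDist (σ0, η0)) (t + 1)) (fun q => Dind q.1 q.2)
          = expect (stepDist Kc (iterDist Kc (deltaDist (σ0, η0)) t)) (fun q => Dind q.1 q.2) :=
            rfl
        _ ≤ (1 - gammaSIS n a kap / n)
              * expect (iterDist Kc (deltaDist (σ0, η0)) t) (fun q => Dind q.1 q.2) :=
            hstep _ (hiter t)
        _ ≤ (1 - gammaSIS n a kap / n) * (Dind σ0 η0 * (1 - gammaSIS n a kap / n) ^ t) :=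
            mul_le_mul_of_nonneg_left ih hγn
        _ = Dind σ0 η0 * (1 - gammaSIS n a kap / n) ^ (t + 1) := by ring
  refine ⟨Kc, ⟨hCnn, marg1, marg2⟩, ?_⟩
  simp only [hamming_eq_Dind]
  exact main t
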